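/- There exists a unique c > 0 with G(c) = 1, and this solution lies in the open interval (a, p·a + (1-p)·b) ⊂ (a, b). -/

import Mathlib

/-!
Writing `D_c = (1-q)e^{-u} + c·w(u)` with `w > 0`, the integrand of `G` is strictly decreasing
in `c`, so `G` is strictly decreasing on `(0, ∞)`, and continuous by dominated convergence. At
`c = a` the numerator exceeds the denominator pointwise, so `G a > ∫ e^{-u} = 1`; at
`m = p·a + (1-p)·b` one has `D_m - N = p(1-p)q(b-a)(e^{-au} - e^{-bu}) > 0` for `u > 0`, so
`G m < 1`. The intermediate value theorem gives a root in `(a, m)`, and strict monotonicity makes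
it unique.
-/

open Real MeasureTheory Set Filter

theorem setIntegral_lt_setIntegral_of_forall_lt {X : Type*} [MeasurableSpace X] {μ : Measure X}
    {s : Set X} {f g : X → ℝ} (hs : MeasurableSet s) (hμs : μ s ≠ 0)
    (hf : IntegrableOn f s μ) (hg : IntegrableOn g s μ) (hlt : ∀ x ∈ s, f x < g x) :
    ∫ x in s, f x ∂μ < ∫ x in s, g x ∂μ := by
  rw [← sub_pos, ← integral_sub hg hf]
  refine (setIntegral_pos_iff_support_of_nonneg_ae ?_ (hg.sub hf)).2 ?_
  · exact (ae_restrict_iff' hs).2 (Eventually.of_forall fun x hx => sub_nonneg.2 (hlt x hx).le)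
  · rwa [inter_eq_self_of_subset_right (s := Function.support (g - f))
      fun x hx => (sub_pos.2 (hlt x hx)).ne', pos_iff_ne_zero]

theorem StrictAntiOn.existsUnique_eq_and_mem_Ioo {f : ℝ → ℝ} {s : Set ℝ} [s.OrdConnected]
    (hcont : ContinuousOn f s) (hanti : StrictAntiOn f s) {a m y : ℝ} (ha : a ∈ s)
    (hm : m ∈ s) (hfm : f m < y) (hfa : y < f a) :
    (∃! c, c ∈ s ∧ f c = y) ∧ ∀ c ∈ s, f c = y → c ∈ Ioo a m := by
  have ham : a < m := (hanti.lt_iff_gt hm ha).1 (hfm.trans hfa)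
  have hIcc : Icc a m ⊆ s := Set.OrdConnected.out ‹_› ha hm
  obtain ⟨c, hc, hfc⟩ := intermediate_value_Ioo' ham.le (hcont.mono hIcc) ⟨hfm, hfa⟩
  have hcs : c ∈ s := hIcc (Ioo_subset_Icc_self hc)
  refine ⟨⟨c, ⟨hcs, hfc⟩, fun c' ⟨hc's, hfc'⟩ =>
    hanti.injOn hc's hcs (hfc'.trans hfc.symm)⟩, ?_⟩
  rintro c hcs rfl
  exact ⟨(hanti.lt_iff_gt hcs ha).1 hfa, (hanti.lt_iff_gt hm hcs).1 hfm⟩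

/-- `N = hazardMix a b p q a b` and `D_c = hazardMix a b p q c c`. -/
noncomputable def hazardMix (a b p q x y u : ℝ) : ℝ :=
  (1 - q) * exp (-u) + p * q * x * exp (-(a * u)) + (1 - p) * q * y * exp (-(b * u))

noncomputable def hazardIntegrand (a b p q c u : ℝ) : ℝ :=
  hazardMix a b p q a b u / hazardMix a b p q c c u * exp (-u)

noncomputable def hazardRatioIntegral (a b p q c : ℝ) : ℝ :=
  ∫ u in Ioi 0, hazardIntegrand a b p q c u

section hazardMix

variable {a b p q x y x' y' : ℝ}

theorem hazardMix_sub_hazardMix (u : ℝ) :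
    hazardMix a b p q x' y' u - hazardMix a b p q x y u =
      p * q * (x' - x) * exp (-(a * u)) + (1 - p) * q * (y' - y) * exp (-(b * u)) := by
  unfold hazardMix; ring

theorem hazardMix_pos (hp₀ : 0 ≤ p) (hp₁ : p ≤ 1) (hq₀ : 0 ≤ q) (hq₁ : q < 1)
    (hx : 0 ≤ x) (hy : 0 ≤ y) (u : ℝ) : 0 < hazardMix a b p q x y u := by
  have h1q : 0 < 1 - q := sub_pos.2 hq₁
  have h1p : 0 ≤ 1 - p := sub_nonneg.2 hp₁
  unfold hazardMix
  positivity

theorem hazardMix_lt_hazardMix (hp₀ : 0 ≤ p) (hp₁ : p < 1) (hq : 0 < q) (hx : x ≤ x')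
    (hy : y < y') (u : ℝ) : hazardMix a b p q x y u < hazardMix a b p q x' y' u := by
  have h1p : 0 < 1 - p := sub_pos.2 hp₁
  have hx' : 0 ≤ x' - x := sub_nonneg.2 hx
  have hy' : 0 < y' - y := sub_pos.2 hy
  rw [← sub_pos, hazardMix_sub_hazardMix]
  positivity

theorem hazardMix_lt_hazardMix_mean (hab : a < b) (hp : p ∈ Ioo 0 1) (hq : 0 < q) {u : ℝ}
    (hu : 0 < u) :
    hazardMix a b p q a b u < hazardMix a b p q (p * a + (1 - p) * b) (p * a + (1 - p) * b) u := by
  have h1p : 0 < 1 - p := sub_pos.2 hp.2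
  have hba : 0 < b - a := sub_pos.2 hab
  have hexp : 0 < exp (-(a * u)) - exp (-(b * u)) := by
    rw [sub_pos, exp_lt_exp, neg_lt_neg_iff]
    exact mul_lt_mul_of_pos_right hab hu
  have := hp.1
  rw [← sub_pos, hazardMix_sub_hazardMix,
    show p * q * (p * a + (1 - p) * b - a) * exp (-(a * u)) +
        (1 - p) * q * (p * a + (1 - p) * b - b) * exp (-(b * u)) =
      p * (1 - p) * q * (b - a) * (exp (-(a * u)) - exp (-(b * u))) by ring]
  positivity

theorem hazardMix_le_mul_hazardMix (hab : a ≤ b) (hb : 0 ≤ b) (hp₀ : 0 ≤ p)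
    (hp₁ : p ≤ 1) (hq₀ : 0 ≤ q) (hq₁ : q ≤ 1) {c₀ c : ℝ} (hc₀ : 0 < c₀)
    (hc : c₀ ≤ c) (u : ℝ) :
    hazardMix a b p q a b u ≤ (1 + b / c₀) * hazardMix a b p q c c u := by
  have hbc : b ≤ (1 + b / c₀) * c := by
    have : b ≤ b / c₀ * c := by
      rw [div_mul_eq_mul_div, le_div_iff₀ hc₀]; exact mul_le_mul_of_nonneg_left hc hb
    nlinarith [hc₀.le.trans hc]
  have h1q : 0 ≤ 1 - q := sub_nonneg.2 hq₁
  have h1p : 0 ≤ 1 - p := sub_nonneg.2 hp₁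
  have hbc₀ : 0 ≤ b / c₀ := by positivity
  have hKa : 0 ≤ (1 + b / c₀) * c - a := by linarith
  have hKb : 0 ≤ (1 + b / c₀) * c - b := by linarith
  rw [← sub_nonneg, show (1 + b / c₀) * hazardMix a b p q c c u - hazardMix a b p q a b u =
      b / c₀ * (1 - q) * exp (-u) + p * q * ((1 + b / c₀) * c - a) * exp (-(a * u)) +
        (1 - p) * q * ((1 + b / c₀) * c - b) * exp (-(b * u)) by unfold hazardMix; ring]
  positivity

theorem continuous_hazardIntegrand (hp₀ : 0 ≤ p) (hp₁ : p ≤ 1) (hq₀ : 0 ≤ q)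
    (hq₁ : q < 1) {c : ℝ} (hc : 0 < c) : Continuous (hazardIntegrand a b p q c) :=
  ((by unfold hazardMix; fun_prop : Continuous (hazardMix a b p q a b)).div
    (by unfold hazardMix; fun_prop)
    fun u => (hazardMix_pos hp₀ hp₁ hq₀ hq₁ hc.le hc.le u).ne').mul (by fun_prop)

end hazardMix

section hazardRatioIntegral

variable {a b p q : ℝ} (ha : 0 < a) (hab : a < b) (hp : p ∈ Ioo 0 1) (hq : q ∈ Ioo 0 1)
include ha hab hp hq

theorem norm_hazardIntegrand_le {c₀ c : ℝ} (hc₀ : 0 < c₀) (hc : c₀ ≤ c) (u : ℝ) :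
    ‖hazardIntegrand a b p q c u‖ ≤ (1 + b / c₀) * exp (-u) := by
  have hN := hazardMix_pos (a := a) (b := b) hp.1.le hp.2.le hq.1.le hq.2 ha.le (ha.trans hab).le u
  have hD := hazardMix_pos (a := a) (b := b) hp.1.le hp.2.le hq.1.le hq.2
    (hc₀.trans_le hc).le (hc₀.trans_le hc).le u
  rw [norm_of_nonneg (by unfold hazardIntegrand; positivity)]
  refine mul_le_mul_of_nonneg_right ((div_le_iff₀ hD).2 ?_) (exp_pos _).le
  exact hazardMix_le_mul_hazardMix hab.le (ha.trans hab).le hp.1.le hp.2.le hq.1.le hq.2.le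
    hc₀ hc u

theorem integrableOn_hazardIntegrand {c : ℝ} (hc : 0 < c) :
    IntegrableOn (hazardIntegrand a b p q c) (Ioi 0) :=
  ((integrableOn_exp_neg_Ioi 0).const_mul (1 + b / c)).mono'
    (continuous_hazardIntegrand hp.1.le hp.2.le hq.1.le hq.2 hc).aestronglyMeasurable
    (Eventually.of_forall (norm_hazardIntegrand_le ha hab hp hq hc le_rfl))

theorem strictAntiOn_hazardRatioIntegral :
    StrictAntiOn (hazardRatioIntegral a b p q) (Ioi 0) := by
  intro c₁ hc₁ c₂ hc₂ h
  refine setIntegral_lt_setIntegral_of_forall_lt measurableSet_Ioi (by simp)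
    (integrableOn_hazardIntegrand ha hab hp hq hc₂)
    (integrableOn_hazardIntegrand ha hab hp hq hc₁)
    fun u _ => mul_lt_mul_of_pos_right (div_lt_div_of_pos_left ?_ ?_ ?_) (exp_pos _)
  · exact hazardMix_pos hp.1.le hp.2.le hq.1.le hq.2 ha.le (ha.trans hab).le u
  · exact hazardMix_pos hp.1.le hp.2.le hq.1.le hq.2 hc₁.le hc₁.le u
  · exact hazardMix_lt_hazardMix hp.1.le hp.2 hq.1 h.le h u

theorem continuousOn_hazardRatioIntegral :
    ContinuousOn (hazardRatioIntegral a b p q) (Ioi 0) := by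
  intro c₀ (hc₀ : 0 < c₀)
  have hnear : ∀ᶠ c in nhds c₀, c₀ / 2 ≤ c := eventually_ge_nhds (by linarith)
  refine (continuousAt_of_dominated (bound := fun u => (1 + b / (c₀ / 2)) * exp (-u)) ?_ ?_
    ((integrableOn_exp_neg_Ioi 0).const_mul _)
    (Eventually.of_forall fun u => ?_)).continuousWithinAt
  · filter_upwards [hnear] with c hc
    exact (continuous_hazardIntegrand hp.1.le hp.2.le hq.1.le hq.2
      (by linarith)).aestronglyMeasurable
  · filter_upwards [hnear] with c hc
    exact Eventually.of_forall (norm_hazardIntegrand_le ha hab hp hq (by linarith) hc)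
  · have hD : Continuous fun c => hazardMix a b p q c c u := by unfold hazardMix; fun_prop
    exact (continuousAt_const.div hD.continuousAt
      (hazardMix_pos hp.1.le hp.2.le hq.1.le hq.2 hc₀.le hc₀.le u).ne').mul continuousAt_const

theorem one_lt_hazardRatioIntegral_left : 1 < hazardRatioIntegral a b p q a := by
  refine integral_exp_neg_Ioi_zero.symm.trans_lt <|
    setIntegral_lt_setIntegral_of_forall_lt measurableSet_Ioi (by simp)
      (integrableOn_exp_neg_Ioi 0) (integrableOn_hazardIntegrand ha hab hp hq ha) fun u _ => ?_
  refine lt_mul_of_one_lt_left (exp_pos _) ((one_lt_div ?_).2 ?_)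
  · exact hazardMix_pos hp.1.le hp.2.le hq.1.le hq.2 ha.le ha.le u
  · exact hazardMix_lt_hazardMix hp.1.le hp.2 hq.1 le_rfl hab u

theorem hazardRatioIntegral_mean_lt_one :
    hazardRatioIntegral a b p q (p * a + (1 - p) * b) < 1 := by
  have hm : 0 < p * a + (1 - p) * b := by nlinarith [hp.1, hp.2]
  refine (setIntegral_lt_setIntegral_of_forall_lt measurableSet_Ioi (by simp)
    (integrableOn_hazardIntegrand ha hab hp hq hm) (integrableOn_exp_neg_Ioi 0)
    fun u hu => ?_).trans_eq integral_exp_neg_Ioi_zero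
  refine mul_lt_of_lt_one_left (exp_pos _) ((div_lt_one ?_).2 ?_)
  · exact hazardMix_pos hp.1.le hp.2.le hq.1.le hq.2 hm.le hm.le u
  · exact hazardMix_lt_hazardMix_mean hab hp hq.1 hu

end hazardRatioIntegral

/-- There exists a unique `c > 0` with `G(c) = 1`, and this solution lies in the open
interval `(a, p·a + (1-p)·b)`. -/
theorem combined_hazard_exists_unique_root (a b p q : ℝ) (ha : 0 < a) (hab : a < b)
    (hp : p ∈ Set.Ioo (0 : ℝ) 1) (hq : q ∈ Set.Ioo (0 : ℝ) 1) :
    (∃! c : ℝ, 0 < c ∧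
      (∫ u in Set.Ioi (0 : ℝ),
        ((1 - q) * exp (-u) + p * q * a * exp (-(a * u)) + (1 - p) * q * b * exp (-(b * u))) /
          ((1 - q) * exp (-u) + p * q * c * exp (-(a * u)) + (1 - p) * q * c * exp (-(b * u))) *
          exp (-u)) = 1) ∧
    (∀ c : ℝ, 0 < c →
      (∫ u in Set.Ioi (0 : ℝ),
        ((1 - q) * exp (-u) + p * q * a * exp (-(a * u)) + (1 - p) * q * b * exp (-(b * u))) /
          ((1 - q) * exp (-u) + p * q * c * exp (-(a * u)) + (1 - p) * q * c * exp (-(b * u))) *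
          exp (-u)) = 1 →
      c ∈ Set.Ioo a (p * a + (1 - p) * b)) :=
  (strictAntiOn_hazardRatioIntegral ha hab hp hq).existsUnique_eq_and_mem_Ioo
    (continuousOn_hazardRatioIntegral ha hab hp hq) (show a ∈ Ioi 0 from ha)
    (show p * a + (1 - p) * b ∈ Ioi 0 by simp only [mem_Ioi]; nlinarith [hp.1, hp.2])
    (hazardRatioIntegral_mean_lt_one ha hab hp hq) (one_lt_hazardRatioIntegral_left ha hab hp hq)
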